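/- arXiv:1803.01718 — 2 statements merged into one kernel-verified Lean document; each statement's English description precedes it below -/
import Mathlib

section
/- Let E be a Banach space and let 1 ≤ q ≤ p ≤ s ≤ r < ∞. Then every mid (q,p)-summable sequence in E is mid (r,s)-summable, and ‖(x_j)‖_{r,s} ≤ ‖(x_j)‖_{q,p} for every mid (q,p)-summable sequence (x_j)_{j=1}^∞ in E. In particular, every mid p-summable sequence is mid s-summable with ‖(x_j)‖_{mid,s} ≤ ‖(x_j)‖_{mid,p} whenever p ≤ s. -/
/-!
Raising the outer exponent from `q` to `r` is the inclusion `ℓ_q ⊆ ℓ_r` applied to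
`j ↦ ‖(x_n^*(x_j))_n‖_p`. Passing from `(q, p)` to `(qs/p, s)` is a duality argument: if
`(x_n^*)` lies in the unit ball of `ℓ_s^w(E*)` and `μ ≥ 0` in the unit ball of the dual of
`ℓ_{s/p}`, Hölder puts `(μ_n^{1/p} x_n^*)` in the unit ball of `ℓ_p^w(E*)`. Taking for `μ` the
norming functional of `G = ∑_j ‖u_j‖^{q/p - 1} u_j`, where `u_j = (|x_n^*(x_j)|^p)_n`, and using
superadditivity of `t ↦ t^{s/p}` gives `∑_j ‖(x_n^*(x_j))_n‖_s^{qs/p} ≤ ‖(x_j)‖_{q,p}^{qs/p}`.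

Both norms are suprema in `ℝ`, so they mean something only when bounded: for weakly summable
sequences this is Banach–Steinhaus (the closed graph theorem for the map into `ℓ_s`), for the mid
sums a gliding hump argument.
-/

open NormedSpace MeasureTheory

noncomputable section

/-- A sequence `x` in `E` is weakly `p`-summable: `∑_j |φ(x_j)|^p < ∞` for all `φ ∈ E*`. -/
def WeaklySummable (𝕜 : Type*) [RCLike 𝕜] {E : Type*} [NormedAddCommGroup E]
    [NormedSpace 𝕜 E] (p : ℝ) (x : ℕ → E) : Prop :=
  ∀ φ : StrongDual 𝕜 E, Summable fun j => ‖φ (x j)‖ ^ p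

/-- The weak `p`-norm of a sequence: `sup_{φ ∈ B_{E*}} (∑_j |φ(x_j)|^p)^{1/p}`. -/
def weakNorm (𝕜 : Type*) [RCLike 𝕜] {E : Type*} [NormedAddCommGroup E]
    [NormedSpace 𝕜 E] (p : ℝ) (x : ℕ → E) : ℝ :=
  ⨆ φ : {φ : StrongDual 𝕜 E // ‖φ‖ ≤ 1}, (∑' j, ‖φ.1 (x j)‖ ^ p) ^ (1 / p)

/-- A sequence `x` in `E` is mid `(q,p)`-summable:
`∑_j (∑_n |x_n^*(x_j)|^p)^{q/p} < ∞` for every weakly `p`-summable sequence `(x_n^*)` in `E*`. -/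
def MidSummable (𝕜 : Type*) [RCLike 𝕜] {E : Type*} [NormedAddCommGroup E]
    [NormedSpace 𝕜 E] (q p : ℝ) (x : ℕ → E) : Prop :=
  ∀ xs : ℕ → StrongDual 𝕜 E, WeaklySummable 𝕜 p xs →
    Summable fun j => (∑' n, ‖xs n (x j)‖ ^ p) ^ (q / p)

/-- The mid `(q,p)`-norm:
`sup over (x_n^*) in the closed unit ball of ℓ_p^w(E*)` of
`(∑_j (∑_n |x_n^*(x_j)|^p)^{q/p})^{1/q}`. -/
def midNorm (𝕜 : Type*) [RCLike 𝕜] {E : Type*} [NormedAddCommGroup E]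
    [NormedSpace 𝕜 E] (q p : ℝ) (x : ℕ → E) : ℝ :=
  ⨆ xs : {xs : ℕ → StrongDual 𝕜 E // WeaklySummable 𝕜 p xs ∧ weakNorm 𝕜 p xs ≤ 1},
    (∑' j, (∑' n, ‖xs.1 n (x j)‖ ^ p) ^ (q / p)) ^ (1 / q)

/-- `u : X → Y` is absolutely `p`-summing: there is `C > 0` with
`(∑_{j=1}^k ‖u(x_j)‖^p)^{1/p} ≤ C sup_{φ ∈ B_{X*}} (∑_{j=1}^k |φ(x_j)|^p)^{1/p}`
for all finite families. -/
def AbsolutelySumming (𝕜 : Type*) [RCLike 𝕜] {X Y : Type*} [NormedAddCommGroup X]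
    [NormedSpace 𝕜 X] [NormedAddCommGroup Y] [NormedSpace 𝕜 Y] (p : ℝ)
    (u : X →L[𝕜] Y) : Prop :=
  ∃ C > 0, ∀ (k : ℕ) (z : Fin k → X),
    (∑ j, ‖u (z j)‖ ^ p) ^ (1 / p) ≤
      C * ⨆ φ : {φ : StrongDual 𝕜 X // ‖φ‖ ≤ 1}, (∑ j, ‖φ.1 (z j)‖ ^ p) ^ (1 / p)

/-- The `p`-summing norm `π_p(u)`: the least admissible constant. -/
def piNorm (𝕜 : Type*) [RCLike 𝕜] {X Y : Type*} [NormedAddCommGroup X]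
    [NormedSpace 𝕜 X] [NormedAddCommGroup Y] [NormedSpace 𝕜 Y] (p : ℝ)
    (u : X →L[𝕜] Y) : ℝ :=
  sInf {C : ℝ | 0 < C ∧ ∀ (k : ℕ) (z : Fin k → X),
    (∑ j, ‖u (z j)‖ ^ p) ^ (1 / p) ≤
      C * ⨆ φ : {φ : StrongDual 𝕜 X // ‖φ‖ ≤ 1}, (∑ j, ‖φ.1 (z j)‖ ^ p) ^ (1 / p)}

variable {𝕜 E F : Type*}

section BanachSteinhaus

variable {Y : Type*} [RCLike 𝕜] [NormedAddCommGroup Y] [NormedSpace 𝕜 Y] [CompleteSpace Y]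

theorem exists_tsum_norm_rpow_le_of_summable {s : ℝ} (hs : 1 ≤ s) (v : ℕ → StrongDual 𝕜 Y)
    (hv : ∀ y, Summable fun n => ‖v n y‖ ^ s) :
    ∃ C, 0 ≤ C ∧ ∀ y, ∑' n, ‖v n y‖ ^ s ≤ C * ‖y‖ ^ s := by
  set P := ENNReal.ofReal s
  have : Fact (1 ≤ P) := ⟨ENNReal.one_le_ofReal.2 hs⟩
  have hP : P.toReal = s := ENNReal.toReal_ofReal (by linarith)
  let T : Y →ₗ[𝕜] lp (fun _ : ℕ => 𝕜) P :=
    { toFun := fun y => ⟨fun n => v n y, memℓp_gen (hP ▸ hv y)⟩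
      map_add' := fun y z => lp.ext <| funext fun n => map_add (v n) y z
      map_smul' := fun c y => lp.ext <| funext fun n => map_smul (v n) c y }
  have hT : Continuous T := T.continuous_of_seq_closed_graph fun u y g hu hTu =>
    lp.ext <| funext fun n => tendsto_nhds_unique
      (((lp.evalCLM 𝕜 (fun _ : ℕ => 𝕜) P n).continuous.tendsto g).comp hTu)
      (((v n).continuous.tendsto y).comp hu)
  refine ⟨‖(⟨T, hT⟩ : Y →L[𝕜] lp (fun _ : ℕ => 𝕜) P)‖ ^ s, by positivity, fun y => ?_⟩
  have hnorm : ‖T y‖ ^ s = ∑' n, ‖v n y‖ ^ s := hP ▸ lp.norm_rpow_eq_tsum (hP ▸ by linarith) (T y)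
  rw [← hnorm, ← Real.mul_rpow (by positivity) (norm_nonneg y)]
  exact Real.rpow_le_rpow (norm_nonneg _)
    ((⟨T, hT⟩ : Y →L[𝕜] lp (fun _ : ℕ => 𝕜) P).le_opNorm y) (by linarith)

end BanachSteinhaus

section Scalar

theorem Real.sum_rpow_le_rpow_sum {ι : Type*} (J : Finset ι) {f : ι → ℝ}
    (hf : ∀ i ∈ J, 0 ≤ f i) {t : ℝ} (ht : 1 ≤ t) :
    ∑ i ∈ J, f i ^ t ≤ (∑ i ∈ J, f i) ^ t := by
  classical
  induction J using Finset.induction_on with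
  | empty => simp [Real.zero_rpow (by linarith : t ≠ 0)]
  | insert a J ha ih =>
    have hJ : ∀ i ∈ J, 0 ≤ f i := fun i hi => hf i (Finset.mem_insert_of_mem hi)
    rw [Finset.sum_insert ha, Finset.sum_insert ha]
    calc f a ^ t + ∑ i ∈ J, f i ^ t ≤ f a ^ t + (∑ i ∈ J, f i) ^ t := by gcongr; exact ih hJ
      _ ≤ (f a + ∑ i ∈ J, f i) ^ t :=
        Real.add_rpow_le_rpow_add (hf a (Finset.mem_insert_self a J)) (Finset.sum_nonneg hJ) ht

theorem Real.rpow_sub_one_mul_le_rpow {ρ b α : ℝ} (hρ : 0 ≤ ρ) (hρb : ρ ≤ b) (hα : α ≤ 1) :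
    b ^ (α - 1) * ρ ≤ ρ ^ α := by
  rcases hρ.eq_or_lt with rfl | hρ
  · simpa using Real.rpow_nonneg le_rfl α
  calc b ^ (α - 1) * ρ ≤ ρ ^ (α - 1) * ρ :=
        mul_le_mul_of_nonneg_right (Real.rpow_le_rpow_of_nonpos hρ hρb (by linarith)) hρ.le
    _ = ρ ^ α := by rw [Real.rpow_sub_one hρ.ne', div_mul_cancel₀ _ hρ.ne']

theorem Real.rpow_div_rpow_mul_self {c t α : ℝ} (hc : 0 ≤ c) (ht : t ≠ 0) (hα : α ≠ 0) :
    (c ^ ((α - 1) / t)) ^ t * c = c ^ α := by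
  rcases hc.eq_or_lt with rfl | hc
  · simp [Real.zero_rpow hα]
  rw [← Real.rpow_mul hc.le, div_mul_cancel₀ _ ht, Real.rpow_sub_one hc.ne',
    div_mul_cancel₀ _ hc.ne']

/-- `μ` is a nonnegative element of the unit ball of the dual of `ℓ^t`, tested only against
nonnegative sequences (for `t = 1` this is `0 ≤ μ ≤ 1`, so no conjugate exponent is needed). -/
def MemDualUnitBall (t : ℝ) (μ : ℕ → ℝ) : Prop :=
  (∀ n, 0 ≤ μ n) ∧ ∀ g : ℕ → ℝ, (∀ n, 0 ≤ g n) → (Summable fun n => g n ^ t) →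
    (Summable fun n => μ n * g n) ∧ ∑' n, μ n * g n ≤ (∑' n, g n ^ t) ^ (1 / t)

theorem exists_memDualUnitBall_tsum_mul_eq {t : ℝ} (ht : 1 ≤ t) {G : ℕ → ℝ} (hG : ∀ n, 0 ≤ G n)
    (hGt : Summable fun n => G n ^ t) :
    ∃ μ, MemDualUnitBall t μ ∧ ∑' n, μ n * G n = (∑' n, G n ^ t) ^ (1 / t) := by
  set V := ∑' n, G n ^ t
  have ht0 : t ≠ 0 := by linarith
  have hV0 : 0 ≤ V := tsum_nonneg fun n => Real.rpow_nonneg (hG n) t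
  rcases hV0.eq_or_lt with hV | hV
  · refine ⟨0, ⟨fun _ => le_rfl, fun g hg _ => ⟨?_, ?_⟩⟩, ?_⟩
    · simp
    · simpa using Real.rpow_nonneg (tsum_nonneg fun n => Real.rpow_nonneg (hg n) t) _
    · simp [← hV, Real.zero_rpow (inv_ne_zero ht0)]
  -- `μ = G^(t-1) / ‖G‖_t^(t-1)` is the norming functional of `G`
  set μ := fun n => G n ^ (t - 1) / V ^ ((t - 1) / t)
  have hμ0 : ∀ n, 0 ≤ μ n := fun n =>
    div_nonneg (Real.rpow_nonneg (hG n) _) (Real.rpow_nonneg hV0 _)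
  have hμG : ∀ n, μ n * G n = G n ^ t / V ^ ((t - 1) / t) := fun n => by
    rw [div_mul_eq_mul_div, mul_comm, ← Real.rpow_one_add' (hG n) (by linarith), add_sub_cancel]
  refine ⟨μ, ⟨hμ0, fun g hg hgt => ?_⟩, ?_⟩
  · rcases ht.eq_or_lt with rfl | ht1
    · simpa [μ] using hgt
    have hconj := (Real.HolderConjugate.conjExponent ht1).symm
    have hμt : ∀ n, μ n ^ t.conjExponent = G n ^ t / V := fun n => by
      rw [Real.div_rpow (Real.rpow_nonneg (hG n) _) (Real.rpow_nonneg hV0 _),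
        ← Real.rpow_mul (hG n), ← Real.rpow_mul hV0, Real.conjExponent,
        show (t - 1) * (t / (t - 1)) = t by field_simp, show (t - 1) / t * (t / (t - 1)) = 1 by field_simp, Real.rpow_one]
    have hμsum : ∑' n, μ n ^ t.conjExponent = 1 := by
      rw [tsum_congr hμt, tsum_div_const, div_self hV.ne']
    obtain ⟨hsum, hle⟩ := Real.summable_and_inner_le_Lp_mul_Lq_tsum_of_nonneg hconj
      hμ0 hg ((hGt.div_const V).congr fun n => (hμt n).symm) hgt
    exact ⟨hsum, by simpa [hμsum] using hle⟩
  · rw [tsum_congr hμG, tsum_div_const, show 1 / t = 1 - (t - 1) / t by field_simp; ring,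
      Real.rpow_sub hV, Real.rpow_one]

theorem summable_finset_sum_rpow {ι : Type*} (J : Finset ι) {f : ι → ℕ → ℝ}
    (hf : ∀ j n, 0 ≤ f j n) {t : ℝ} (ht : 1 ≤ t) (hft : ∀ j, Summable fun n => f j n ^ t) :
    Summable fun n => (∑ j ∈ J, f j n) ^ t :=
  Summable.of_nonneg_of_le (fun n => Real.rpow_nonneg (Finset.sum_nonneg fun j _ => hf j n) t)
    (fun n => Real.rpow_sum_le_const_mul_sum_rpow_of_nonneg J ht fun j _ => hf j n)
    ((summable_sum fun j _ => hft j).mul_left _)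

theorem MemDualUnitBall.rpow_mul_tsum_le {t α : ℝ} {μ u : ℕ → ℝ} (hμ : MemDualUnitBall t μ)
    (hu : ∀ n, 0 ≤ u n) (hut : Summable fun n => u n ^ t) (hα : α ≤ 1) :
    (∑' n, u n ^ t) ^ ((α - 1) / t) * ∑' n, μ n * u n ≤ (∑' n, μ n * u n) ^ α := by
  rw [show (α - 1) / t = 1 / t * (α - 1) by ring,
    Real.rpow_mul (tsum_nonneg fun n => Real.rpow_nonneg (hu n) t)]
  exact Real.rpow_sub_one_mul_le_rpow (tsum_nonneg fun n => mul_nonneg (hμ.1 n) (hu n))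
    (hμ.2 u hu hut).2 hα

theorem sum_tsum_rpow_le_of_forall_memDualUnitBall {ι : Type*} (J : Finset ι) {u : ι → ℕ → ℝ}
    (hu : ∀ j n, 0 ≤ u j n) {t α M : ℝ} (ht : 1 ≤ t) (hα0 : 0 < α) (hα1 : α ≤ 1)
    (hut : ∀ j, Summable fun n => u j n ^ t)
    (hM : ∀ μ, MemDualUnitBall t μ → ∑ j ∈ J, (∑' n, μ n * u j n) ^ α ≤ M) :
    ∑ j ∈ J, (∑' n, u j n ^ t) ^ α ≤ M ^ t := by
  have ht0 : 0 < t := by linarith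
  have hc0 : ∀ j, 0 ≤ ∑' n, u j n ^ t := fun j =>
    tsum_nonneg fun n => Real.rpow_nonneg (hu j n) t
  -- weighting row `j` by `‖u j‖_t ^ (α - 1)` turns its `t`-th power sum into `‖u j‖_t ^ (α t)`
  set w := fun j => (∑' n, u j n ^ t) ^ ((α - 1) / t)
  have hw0 : ∀ j, 0 ≤ w j := fun j => Real.rpow_nonneg (hc0 j) _
  have hwu0 : ∀ j n, 0 ≤ w j * u j n := fun j n => mul_nonneg (hw0 j) (hu j n)
  have hwut : ∀ j n, (w j * u j n) ^ t = w j ^ t * u j n ^ t :=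
    fun j n => Real.mul_rpow (hw0 j) (hu j n)
  have hrow : ∀ j, Summable fun n => (w j * u j n) ^ t :=
    fun j => ((hut j).mul_left (w j ^ t)).congr fun n => (hwut j n).symm
  set G := fun n => ∑ j ∈ J, w j * u j n
  have hG0 : ∀ n, 0 ≤ G n := fun n => Finset.sum_nonneg fun j _ => hwu0 j n
  have hGt : Summable fun n => G n ^ t := summable_finset_sum_rpow J hwu0 ht hrow
  have hcG : ∑ j ∈ J, (∑' n, u j n ^ t) ^ α ≤ ∑' n, G n ^ t := calc
    _ = ∑ j ∈ J, ∑' n, (w j * u j n) ^ t := Finset.sum_congr rfl fun j _ => by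
        rw [tsum_congr (hwut j), tsum_mul_left,
          Real.rpow_div_rpow_mul_self (hc0 j) ht0.ne' hα0.ne']
    _ = ∑' n, ∑ j ∈ J, (w j * u j n) ^ t := (Summable.tsum_finsetSum fun j _ => hrow j).symm
    _ ≤ ∑' n, G n ^ t := Summable.tsum_le_tsum
        (fun n => Real.sum_rpow_le_rpow_sum J (fun j _ => hwu0 j n) ht)
        (summable_sum fun j _ => hrow j) hGt
  obtain ⟨μ, hμ, hμG⟩ := exists_memDualUnitBall_tsum_mul_eq ht hG0 hGt
  have hGM : (∑' n, G n ^ t) ^ (1 / t) ≤ M := calc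
    _ = ∑' n, ∑ j ∈ J, w j * (μ n * u j n) := hμG.symm.trans <| tsum_congr fun n => by
        rw [Finset.mul_sum]
        exact Finset.sum_congr rfl fun j _ => by ring
    _ = ∑ j ∈ J, w j * ∑' n, μ n * u j n := by
        rw [Summable.tsum_finsetSum fun j _ => ((hμ.2 _ (hu j) (hut j)).1.mul_left (w j))]
        exact Finset.sum_congr rfl fun j _ => tsum_mul_left
    _ ≤ ∑ j ∈ J, (∑' n, μ n * u j n) ^ α :=
        Finset.sum_le_sum fun j _ => hμ.rpow_mul_tsum_le (hu j) (hut j) hα1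
    _ ≤ M := hM μ hμ
  have hV0 : 0 ≤ ∑' n, G n ^ t := tsum_nonneg fun n => Real.rpow_nonneg (hG0 n) t
  rw [one_div, Real.rpow_inv_le_iff_of_pos hV0 ((Real.rpow_nonneg hV0 _).trans hGM) ht0] at hGM
  exact hcG.trans hGM

end Scalar

section WeakUnitBall

variable [RCLike 𝕜]

theorem norm_ofReal_rpow_inv_smul_rpow [NormedAddCommGroup F] [NormedSpace 𝕜 F] {μ p : ℝ}
    (hμ : 0 ≤ μ) (hp : p ≠ 0) (z : F) :
    ‖((μ ^ p⁻¹ : ℝ) : 𝕜) • z‖ ^ p = μ * ‖z‖ ^ p := by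
  rw [norm_smul, RCLike.norm_ofReal, abs_of_nonneg (Real.rpow_nonneg hμ _),
    Real.mul_rpow (Real.rpow_nonneg hμ _) (norm_nonneg z), Real.rpow_inv_rpow hμ hp]

theorem tsum_norm_rpow_le_of_forall_norm_le_one {Y : Type*} [NormedAddCommGroup Y]
    [NormedSpace 𝕜 Y] {p : ℝ} (hp : 0 < p) (v : ℕ → StrongDual 𝕜 Y)
    (h : ∀ y, ‖y‖ ≤ 1 → ∑' n, ‖v n y‖ ^ p ≤ 1) (y : Y) :
    ∑' n, ‖v n y‖ ^ p ≤ ‖y‖ ^ p := by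
  rcases eq_or_ne y 0 with rfl | hy
  · simp [Real.zero_rpow hp.ne']
  have hy : 0 < ‖y‖ ^ p := Real.rpow_pos_of_pos (norm_pos_iff.2 hy) p
  have hunit := h ((((‖y‖ ^ p)⁻¹ ^ p⁻¹ : ℝ) : 𝕜) • y) (by
    rw [← Real.rpow_le_rpow_iff (norm_nonneg _) zero_le_one hp, Real.one_rpow,
      norm_ofReal_rpow_inv_smul_rpow (inv_nonneg.2 hy.le) hp.ne', inv_mul_cancel₀ hy.ne'])
  simp_rw [map_smul, norm_ofReal_rpow_inv_smul_rpow (inv_nonneg.2 hy.le) hp.ne'] at hunit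
  rwa [tsum_mul_left, inv_mul_le_iff₀ hy, mul_one] at hunit

variable [NormedAddCommGroup E] [NormedSpace 𝕜 E]

theorem WeaklySummable.summable_apply {p : ℝ} {y : ℕ → StrongDual 𝕜 E}
    (hy : WeaklySummable 𝕜 p y) (x : E) : Summable fun n => ‖y n x‖ ^ p :=
  hy (inclusionInDoubleDual 𝕜 E x)

theorem WeaklySummable.exists_tsum_le {p : ℝ} (hp : 1 ≤ p) {y : ℕ → StrongDual 𝕜 E}
    (hy : WeaklySummable 𝕜 p y) :
    ∃ C, 0 ≤ C ∧ ∀ Φ : StrongDual 𝕜 (StrongDual 𝕜 E), ∑' n, ‖Φ (y n)‖ ^ p ≤ C * ‖Φ‖ ^ p := by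
  obtain ⟨C, hC0, hC⟩ := exists_tsum_norm_rpow_le_of_summable (𝕜 := 𝕜)
    (Y := StrongDual 𝕜 (StrongDual 𝕜 E)) hp (fun n => inclusionInDoubleDual 𝕜 _ (y n))
    fun Φ => by simpa only [dual_def] using hy Φ
  exact ⟨C, hC0, fun Φ => by simpa only [dual_def] using hC Φ⟩

variable (𝕜) in
/-- The closed unit ball of `ℓ_p^w(E*)` in homogeneous form. Unlike `weakNorm 𝕜 p y ≤ 1` (a
supremum in `ℝ`, hence `0` when unbounded) it needs no boundedness argument; the two agree for
`1 ≤ p` by Banach–Steinhaus. -/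
def InWeakUnitBall (p : ℝ) (y : ℕ → StrongDual 𝕜 E) : Prop :=
  WeaklySummable 𝕜 p y ∧ ∀ Φ : StrongDual 𝕜 (StrongDual 𝕜 E), ∑' n, ‖Φ (y n)‖ ^ p ≤ ‖Φ‖ ^ p

theorem inWeakUnitBall_zero {p : ℝ} (hp : p ≠ 0) : InWeakUnitBall 𝕜 p (0 : ℕ → StrongDual 𝕜 E) :=
  ⟨fun Φ => by simp [Real.zero_rpow hp], fun Φ => by simp [Real.zero_rpow hp]; positivity⟩

theorem InWeakUnitBall.weakNorm_le_one {p : ℝ} (hp : 0 < p) {y : ℕ → StrongDual 𝕜 E}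
    (hy : InWeakUnitBall 𝕜 p y) : weakNorm 𝕜 p y ≤ 1 :=
  Real.iSup_le (fun Φ => calc
    (∑' n, ‖Φ.1 (y n)‖ ^ p) ^ (1 / p) ≤ (‖Φ.1‖ ^ p) ^ (1 / p) :=
      Real.rpow_le_rpow (by positivity) (hy.2 Φ) (by positivity)
    _ = ‖Φ.1‖ := by rw [one_div, Real.rpow_rpow_inv (norm_nonneg _) hp.ne']
    _ ≤ 1 := Φ.2) zero_le_one

theorem inWeakUnitBall_of_weakNorm_le_one {p : ℝ} (hp : 1 ≤ p) {y : ℕ → StrongDual 𝕜 E}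
    (hy : WeaklySummable 𝕜 p y) (hn : weakNorm 𝕜 p y ≤ 1) : InWeakUnitBall 𝕜 p y := by
  have hp0 : 0 < p := by linarith
  obtain ⟨C, hC0, hC⟩ := hy.exists_tsum_le hp
  have hbdd : BddAbove (Set.range fun Φ : {Φ : StrongDual 𝕜 (StrongDual 𝕜 E) // ‖Φ‖ ≤ 1} =>
      (∑' n, ‖Φ.1 (y n)‖ ^ p) ^ (1 / p)) := by
    refine ⟨C ^ (1 / p), ?_⟩
    rintro _ ⟨Φ, rfl⟩
    refine Real.rpow_le_rpow (by positivity) ((hC Φ).trans ?_) (by positivity)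
    exact mul_le_of_le_one_right hC0 (Real.rpow_le_one (norm_nonneg Φ.1) Φ.2 hp0.le)
  have hunit : ∀ Φ : StrongDual 𝕜 (StrongDual 𝕜 E), ‖Φ‖ ≤ 1 → ∑' n, ‖Φ (y n)‖ ^ p ≤ 1 :=
    fun Φ hΦ => by
      have hle := (le_ciSup hbdd ⟨Φ, hΦ⟩).trans hn
      rwa [one_div, Real.rpow_inv_le_iff_of_pos (by positivity) zero_le_one hp0,
        Real.one_rpow] at hle
  refine ⟨hy, fun Φ => ?_⟩
  simpa only [dual_def] using tsum_norm_rpow_le_of_forall_norm_le_one (𝕜 := 𝕜)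
    (Y := StrongDual 𝕜 (StrongDual 𝕜 E)) hp0
    (fun n => inclusionInDoubleDual 𝕜 _ (y n))
    (fun Φ hΦ => by simpa only [dual_def] using hunit Φ hΦ) Φ

theorem WeaklySummable.exists_inWeakUnitBall_smul {p : ℝ} (hp : 1 ≤ p)
    {y : ℕ → StrongDual 𝕜 E} (hy : WeaklySummable 𝕜 p y) :
    ∃ μ : ℝ, 0 < μ ∧ InWeakUnitBall 𝕜 p fun n => ((μ ^ p⁻¹ : ℝ) : 𝕜) • y n := by
  obtain ⟨C, hC0, hC⟩ := hy.exists_tsum_le hp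
  have hμ : 0 < (C + 1)⁻¹ := by positivity
  have hnorm : ∀ (Φ : StrongDual 𝕜 (StrongDual 𝕜 E)) n,
      ‖Φ ((((C + 1)⁻¹ ^ p⁻¹ : ℝ) : 𝕜) • y n)‖ ^ p = (C + 1)⁻¹ * ‖Φ (y n)‖ ^ p := fun Φ n => by
    rw [map_smul, norm_ofReal_rpow_inv_smul_rpow hμ.le (by linarith)]
  refine ⟨(C + 1)⁻¹, hμ, fun Φ => ((hy Φ).mul_left _).congr fun n => (hnorm Φ n).symm,
    fun Φ => ?_⟩
  rw [tsum_congr (hnorm Φ), tsum_mul_left, inv_mul_le_iff₀ (by positivity)]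
  nlinarith [hC Φ, Real.rpow_nonneg (norm_nonneg Φ) p]

theorem InWeakUnitBall.smul_of_memDualUnitBall {p s : ℝ} (hp : 0 < p) (hs : 0 < s)
    {y : ℕ → StrongDual 𝕜 E} (hy : InWeakUnitBall 𝕜 s y) {μ : ℕ → ℝ}
    (hμ : MemDualUnitBall (s / p) μ) :
    InWeakUnitBall 𝕜 p fun n => ((μ n ^ p⁻¹ : ℝ) : 𝕜) • y n := by
  have hnorm : ∀ (Φ : StrongDual 𝕜 (StrongDual 𝕜 E)) n,
      ‖Φ (((μ n ^ p⁻¹ : ℝ) : 𝕜) • y n)‖ ^ p = μ n * ‖Φ (y n)‖ ^ p := fun Φ n => by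
    rw [map_smul, norm_ofReal_rpow_inv_smul_rpow (hμ.1 n) hp.ne']
  have hpow : ∀ a : ℝ, 0 ≤ a → (a ^ p) ^ (s / p) = a ^ s := fun a ha => by
    rw [← Real.rpow_mul ha, mul_div_cancel₀ _ hp.ne']
  have hdual := fun Φ : StrongDual 𝕜 (StrongDual 𝕜 E) =>
    hμ.2 (fun n => ‖Φ (y n)‖ ^ p) (fun n => by positivity)
      ((hy.1 Φ).congr fun n => (hpow _ (norm_nonneg _)).symm)
  refine ⟨fun Φ => (hdual Φ).1.congr fun n => (hnorm Φ n).symm, fun Φ => ?_⟩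
  calc ∑' n, ‖Φ (((μ n ^ p⁻¹ : ℝ) : 𝕜) • y n)‖ ^ p = ∑' n, μ n * ‖Φ (y n)‖ ^ p :=
        tsum_congr (hnorm Φ)
    _ ≤ (∑' n, ‖Φ (y n)‖ ^ s) ^ (1 / (s / p)) := by
        simpa only [hpow _ (norm_nonneg _)] using (hdual Φ).2
    _ ≤ (‖Φ‖ ^ s) ^ (1 / (s / p)) := Real.rpow_le_rpow (by positivity) (hy.2 Φ) (by positivity)
    _ = ‖Φ‖ ^ p := by
        rw [← Real.rpow_mul (norm_nonneg Φ), mul_one_div, div_div_cancel₀ hs.ne']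

end WeakUnitBall

section MidSummable

variable [RCLike 𝕜] [NormedAddCommGroup E] [NormedSpace 𝕜 E]

theorem exists_weaklySummable_forall_le_tsum {p : ℝ} (hp : p ≠ 0)
    {y : ℕ → ℕ → StrongDual 𝕜 E} (hy : ∀ k, InWeakUnitBall 𝕜 p (y k)) {w : ℕ → ℝ}
    (hw0 : ∀ k, 0 ≤ w k) (hw : Summable w) :
    ∃ z : ℕ → StrongDual 𝕜 E, WeaklySummable 𝕜 p z ∧
      ∀ k (x : E), w k * ∑' n, ‖y k n x‖ ^ p ≤ ∑' m, ‖z m x‖ ^ p := by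
  let e : ℕ ≃ ℕ × ℕ := Nat.pairEquiv.symm
  let z : ℕ → StrongDual 𝕜 E := fun m => ((w (e m).1 ^ p⁻¹ : ℝ) : 𝕜) • y (e m).1 (e m).2
  have hzW : WeaklySummable 𝕜 p z := fun Φ => by
    have hrow : ∀ k, Summable fun n => w k * ‖Φ (y k n)‖ ^ p := fun k => ((hy k).1 Φ).mul_left _
    have hprod : Summable fun kn : ℕ × ℕ => w kn.1 * ‖Φ (y kn.1 kn.2)‖ ^ p := by
      refine (summable_prod_of_nonneg fun kn => by have := hw0 kn.1; positivity).2 ⟨hrow, ?_⟩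
      refine Summable.of_nonneg_of_le (fun k => by have := hw0 k; positivity) (fun k => ?_)
        (hw.mul_right (‖Φ‖ ^ p))
      simp only [tsum_mul_left]
      exact mul_le_mul_of_nonneg_left ((hy k).2 Φ) (hw0 k)
    refine (e.summable_iff.2 hprod).congr fun m => ?_
    simp only [z, Function.comp_apply, map_smul, norm_ofReal_rpow_inv_smul_rpow (hw0 _) hp]
  refine ⟨z, hzW, fun k x => ?_⟩
  have hzx : ∀ n, ‖z (e.symm (k, n)) x‖ ^ p = w k * ‖y k n x‖ ^ p := fun n => by
    simp only [z, Equiv.apply_symm_apply, smul_apply,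
      norm_ofReal_rpow_inv_smul_rpow (hw0 _) hp]
  rw [← tsum_mul_left, ← tsum_congr hzx]
  exact tsum_comp_le_tsum_of_inj (hzW.summable_apply x) (fun m => by positivity)
    (e.symm.injective.comp (Prod.mk_right_injective k))

/-- Gliding hump: were the mid sums unbounded on the unit ball, a summable combination of
witnesses would make a single mid sum infinite. -/
theorem MidSummable.exists_tsum_le {q p : ℝ} (hq : 0 ≤ q) (hp : 0 < p) {x : ℕ → E}
    (hx : MidSummable 𝕜 q p x) :
    ∃ M, ∀ y, InWeakUnitBall 𝕜 p y → ∑' j, (∑' n, ‖y n (x j)‖ ^ p) ^ (q / p) ≤ M := by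
  by_contra! h
  set w : ℕ → ℝ := fun k => 2⁻¹ ^ k
  choose y hy hlt using fun k : ℕ => h (k / w k ^ (q / p))
  obtain ⟨z, hzW, hz⟩ := exists_weaklySummable_forall_le_tsum hp.ne' hy (fun k => by positivity)
    (summable_geometric_of_lt_one (r := 2⁻¹) (by norm_num) (by norm_num))
  obtain ⟨k, hk⟩ := exists_nat_gt (∑' j, (∑' m, ‖z m (x j)‖ ^ p) ^ (q / p))
  have hwk : 0 < w k ^ (q / p) := by positivity
  refine hk.not_ge ?_
  calc (k : ℝ) = w k ^ (q / p) * (k / w k ^ (q / p)) := by field_simp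
    _ ≤ w k ^ (q / p) * ∑' j, (∑' n, ‖y k n (x j)‖ ^ p) ^ (q / p) :=
        mul_le_mul_of_nonneg_left (hlt k).le hwk.le
    _ = ∑' j, w k ^ (q / p) * (∑' n, ‖y k n (x j)‖ ^ p) ^ (q / p) := tsum_mul_left.symm
    _ ≤ ∑' j, (∑' m, ‖z m (x j)‖ ^ p) ^ (q / p) := by
        refine Summable.tsum_le_tsum (fun j => ?_) ((hx (y k) (hy k).1).mul_left _) (hx z hzW)
        rw [← Real.mul_rpow (by positivity) (by positivity)]
        exact Real.rpow_le_rpow (by positivity) (hz k (x j)) (by positivity)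

variable (𝕜) in
/-- `N` bounds the mid `(q, p)` sums of `x` over the unit ball of `ℓ_p^w(E*)`, taken over finite
sets of indices so that no summability is presupposed. -/
def MidNormBoundedBy (q p : ℝ) (x : ℕ → E) (N : ℝ) : Prop :=
  ∀ y, InWeakUnitBall 𝕜 p y → ∀ J : Finset ℕ,
    (∑ j ∈ J, (∑' n, ‖y n (x j)‖ ^ p) ^ (q / p)) ^ (1 / q) ≤ N

variable {q p r s N : ℝ} {x : ℕ → E}

theorem MidNormBoundedBy.nonneg (hq : q ≠ 0) (hp : p ≠ 0) (h : MidNormBoundedBy 𝕜 q p x N) :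
    0 ≤ N := by
  simpa [Real.zero_rpow (inv_ne_zero hq)] using h 0 (inWeakUnitBall_zero hp) ∅

theorem MidNormBoundedBy.sum_le (hq : 0 < q) (hp : p ≠ 0) (h : MidNormBoundedBy 𝕜 q p x N)
    {y : ℕ → StrongDual 𝕜 E} (hy : InWeakUnitBall 𝕜 p y) (J : Finset ℕ) :
    ∑ j ∈ J, (∑' n, ‖y n (x j)‖ ^ p) ^ (q / p) ≤ N ^ q := by
  rw [← Real.rpow_inv_le_iff_of_pos (by positivity) (h.nonneg hq.ne' hp) hq, ← one_div]
  exact h y hy J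

theorem MidSummable.midNormBoundedBy_midNorm (hq : 0 < q) (hp : 1 ≤ p)
    (hx : MidSummable 𝕜 q p x) : MidNormBoundedBy 𝕜 q p x (midNorm 𝕜 q p x) := by
  obtain ⟨M, hM⟩ := hx.exists_tsum_le hq.le (by linarith)
  intro y hy J
  calc (∑ j ∈ J, (∑' n, ‖y n (x j)‖ ^ p) ^ (q / p)) ^ (1 / q)
      ≤ (∑' j, (∑' n, ‖y n (x j)‖ ^ p) ^ (q / p)) ^ (1 / q) :=
        Real.rpow_le_rpow (by positivity)
          ((hx y hy.1).sum_le_tsum J fun j _ => by positivity) (by positivity)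
    _ ≤ midNorm 𝕜 q p x := by
        refine le_ciSup (f := fun ys : {ys : ℕ → StrongDual 𝕜 E //
            WeaklySummable 𝕜 p ys ∧ weakNorm 𝕜 p ys ≤ 1} =>
          (∑' j, (∑' n, ‖ys.1 n (x j)‖ ^ p) ^ (q / p)) ^ (1 / q)) ⟨M ^ (1 / q), ?_⟩
          ⟨y, hy.1, hy.weakNorm_le_one (by linarith)⟩
        rintro _ ⟨ys, rfl⟩
        exact Real.rpow_le_rpow (by positivity)
          (hM ys (inWeakUnitBall_of_weakNorm_le_one hp ys.2.1 ys.2.2)) (by positivity)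

theorem MidNormBoundedBy.mono_left (hq : 0 < q) (hqr : q ≤ r) (h : MidNormBoundedBy 𝕜 q p x N) :
    MidNormBoundedBy 𝕜 r p x N := by
  have hr : 0 < r := hq.trans_le hqr
  intro y hy J
  set e := fun j => (∑' n, ‖y n (x j)‖ ^ p) ^ (q / p)
  have he0 : ∀ j, 0 ≤ e j := fun j => by positivity
  have he : ∀ j, (∑' n, ‖y n (x j)‖ ^ p) ^ (r / p) = e j ^ (r / q) := fun j => by
    rw [← Real.rpow_mul (by positivity)]
    congr 1
    field_simp
  calc (∑ j ∈ J, (∑' n, ‖y n (x j)‖ ^ p) ^ (r / p)) ^ (1 / r)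
      = (∑ j ∈ J, e j ^ (r / q)) ^ (1 / r) := by simp only [he]
    _ ≤ ((∑ j ∈ J, e j) ^ (r / q)) ^ (1 / r) :=
        Real.rpow_le_rpow (Finset.sum_nonneg fun j _ => Real.rpow_nonneg (he0 j) _)
          (Real.sum_rpow_le_rpow_sum J (fun j _ => he0 j) ((one_le_div hq).2 hqr))
          (by positivity)
    _ = (∑ j ∈ J, e j) ^ (1 / q) := by
        rw [← Real.rpow_mul (Finset.sum_nonneg fun j _ => he0 j)]
        congr 1
        field_simp
    _ ≤ N := h y hy J

theorem MidNormBoundedBy.mono_right (hq : 0 < q) (hqp : q ≤ p) (hps : p ≤ s)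
    (h : MidNormBoundedBy 𝕜 q p x N) : MidNormBoundedBy 𝕜 (q * s / p) s x N := by
  have hp : 0 < p := hq.trans_le hqp
  have hs : 0 < s := hp.trans_le hps
  have hN := h.nonneg hq.ne' hp.ne'
  intro xs hxs J
  have hpow : ∀ j n, (‖xs n (x j)‖ ^ p) ^ (s / p) = ‖xs n (x j)‖ ^ s := fun j n => by
    rw [← Real.rpow_mul (norm_nonneg _), mul_div_cancel₀ _ hp.ne']
  have key := sum_tsum_rpow_le_of_forall_memDualUnitBall J (u := fun j n => ‖xs n (x j)‖ ^ p)
    (fun j n => by positivity) ((one_le_div hp).2 hps) (div_pos hq hp) ((div_le_one hp).2 hqp)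
    (fun j => (hxs.1.summable_apply (x j)).congr fun n => (hpow j n).symm) fun μ hμ => by
      have := h.sum_le hq hp.ne' (hxs.smul_of_memDualUnitBall hp hs hμ) J
      simpa only [smul_apply, norm_ofReal_rpow_inv_smul_rpow (hμ.1 _) hp.ne'] using this
  simp only [hpow] at key
  rw [show q * s / p / s = q / p by field_simp, one_div,
    Real.rpow_inv_le_iff_of_pos (by positivity) hN (by positivity)]
  rwa [← Real.rpow_mul hN, ← mul_div_assoc] at key

theorem MidNormBoundedBy.midSummable (hr : 0 < r) (hs : 1 ≤ s) (h : MidNormBoundedBy 𝕜 r s x N) :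
    MidSummable 𝕜 r s x := by
  intro xs hxs
  obtain ⟨μ, hμ, hys⟩ := hxs.exists_inWeakUnitBall_smul hs
  have hterm : ∀ j, (∑' n, ‖(((μ ^ s⁻¹ : ℝ) : 𝕜) • xs n) (x j)‖ ^ s) ^ (r / s) =
      μ ^ (r / s) * (∑' n, ‖xs n (x j)‖ ^ s) ^ (r / s) := fun j => by
    simp only [smul_apply, norm_ofReal_rpow_inv_smul_rpow hμ.le (by linarith : s ≠ 0)]
    rw [tsum_mul_left, Real.mul_rpow hμ.le (by positivity)]
  have hsum := summable_of_sum_le (fun j => by positivity) (h.sum_le hr (by linarith) hys)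
  simp only [hterm] at hsum
  exact (summable_mul_left_iff (by positivity)).1 hsum

theorem MidNormBoundedBy.midNorm_le (hr : 0 < r) (hs : 1 ≤ s) (h : MidNormBoundedBy 𝕜 r s x N) :
    midNorm 𝕜 r s x ≤ N := by
  have hN := h.nonneg hr.ne' (by linarith)
  refine Real.iSup_le (fun ⟨xs, hW, hn⟩ => ?_) hN
  rw [one_div, Real.rpow_inv_le_iff_of_pos (by positivity) hN hr]
  exact tsum_le_of_sum_le' (by positivity)
    (h.sum_le hr (by linarith) (inWeakUnitBall_of_weakNorm_le_one hs hW hn))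

end MidSummable

theorem stmt8_general [RCLike 𝕜] [NormedAddCommGroup E] [NormedSpace 𝕜 E]
    (p q r s : ℝ) (hq : 1 ≤ q) (hqp : q ≤ p) (hps : p ≤ s) (hsr : s ≤ r)
    (x : ℕ → E) (hx : MidSummable 𝕜 q p x) :
    MidSummable 𝕜 r s x ∧ midNorm 𝕜 r s x ≤ midNorm 𝕜 q p x := by
  have hq0 : 0 < q := by linarith
  have hp0 : 0 < p := by linarith
  have hs1 : 1 ≤ s := by linarith
  have hqsr : q * s / p ≤ r := by
    rw [div_le_iff₀ hp0]
    nlinarith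
  have h := ((hx.midNormBoundedBy_midNorm hq0 (by linarith)).mono_right hq0 hqp hps).mono_left
    (by positivity) hqsr
  exact ⟨h.midSummable (by linarith) hs1, h.midNorm_le (by linarith) hs1⟩

/-- if `1 ≤ q ≤ p ≤ s ≤ r` then every mid `(q,p)`-summable sequence is mid
`(r,s)`-summable with `‖(x_j)‖_{r,s} ≤ ‖(x_j)‖_{q,p}` (in particular, `ℓ_p^mid ⊆ ℓ_s^mid`
with the corresponding norm inequality whenever `p ≤ s`). -/
theorem stmt8 [RCLike 𝕜] [NormedAddCommGroup E] [NormedSpace 𝕜 E] [CompleteSpace E]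
    (p q r s : ℝ) (hq : 1 ≤ q) (hqp : q ≤ p) (hps : p ≤ s) (hsr : s ≤ r)
    (x : ℕ → E) (hx : MidSummable 𝕜 q p x) :
    MidSummable 𝕜 r s x ∧ midNorm 𝕜 r s x ≤ midNorm 𝕜 q p x :=
  stmt8_general p q r s hq hqp hps hsr x hx
end
end

section
/- Let E and F be Banach spaces, 1 ≤ p, q < ∞, and T : E → F a bounded linear operator. If (x_j)_{j=1}^∞ is a mid (q,p)-summable sequence in E, then (T(x_j))_{j=1}^∞ is a mid (q,p)-summable sequence in F, and the induced linear operator T̂ : ℓ_{q,p}^mid(E) → ℓ_{q,p}^mid(F), T̂((x_j)_j) = (T(x_j))_j, is bounded with operator norm ‖T̂‖ = ‖T‖. -/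
open NormedSpace MeasureTheory

noncomputable section

/-!
Composition with `T` on the right is the dual map `T* : F* → E*`, which maps the unit ball of
`ℓ_p^w(F*)` into `‖T‖` times the unit ball of `ℓ_p^w(E*)`; since the mixed sum is homogeneous of
degree `q` in the functionals, this gives `‖T̂‖ ≤ ‖T‖`. For the reverse inequality, a sequence
supported at one index `v, 0, 0, …` has mid norm exactly `‖v‖` (test against a norming functional).
The suprema defining the norms are finite: for `ℓ_p^w` by the closed graph theorem, for the mid
norm by a gliding hump argument.
-/

open Filter Topology

variable {𝕜 E F : Type*}

lemma tsum_mul_rpow {p c : ℝ} (hc : 0 ≤ c) {a : ℕ → ℝ} (ha : ∀ n, 0 ≤ a n) :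
    ∑' n, (c * a n) ^ p = c ^ p * ∑' n, a n ^ p := by
  simp_rw [Real.mul_rpow hc (ha _)]
  exact tsum_mul_left

lemma rpow_tsum_mul_rpow {p c : ℝ} (hp : p ≠ 0) (hc : 0 ≤ c) {a : ℕ → ℝ} (ha : ∀ n, 0 ≤ a n) :
    (∑' n, (c * a n) ^ p) ^ (1 / p) = c * (∑' n, a n ^ p) ^ (1 / p) := by
  rw [tsum_mul_rpow hc ha, Real.mul_rpow (Real.rpow_nonneg hc p)
    (tsum_nonneg fun n => Real.rpow_nonneg (ha n) p), ← Real.rpow_mul hc,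
    mul_one_div_cancel hp, Real.rpow_one]

lemma rpow_div_rpow_one_div {p q s : ℝ} (hq : q ≠ 0) (hs : 0 ≤ s) :
    (s ^ (q / p)) ^ (1 / q) = s ^ (1 / p) := by
  rw [← Real.rpow_mul hs, div_mul_div_comm, mul_one, mul_comm, ← div_div, div_self hq]

lemma hasSum_comp_single [Zero E] {f : E → ℝ} (hf : f 0 = 0) (i : ℕ) (v : E) :
    HasSum (fun j => f ((Pi.single i v : ℕ → E) j)) (f v) := by
  convert hasSum_single i fun j hj => ?_ using 1
  · simp
  · simp [hj, hf]

def ContinuousLinearMap.dualMap [RCLike 𝕜] [NormedAddCommGroup E] [NormedSpace 𝕜 E]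
    [NormedAddCommGroup F] [NormedSpace 𝕜 F] (T : E →L[𝕜] F) :
    StrongDual 𝕜 F →L[𝕜] StrongDual 𝕜 E :=
  (ContinuousLinearMap.compL 𝕜 E F 𝕜).flip T

@[simp]
lemma ContinuousLinearMap.dualMap_apply [RCLike 𝕜] [NormedAddCommGroup E] [NormedSpace 𝕜 E]
    [NormedAddCommGroup F] [NormedSpace 𝕜 F] (T : E →L[𝕜] F) (g : StrongDual 𝕜 F) :
    T.dualMap g = g.comp T :=
  rfl

lemma ContinuousLinearMap.norm_dualMap_le [RCLike 𝕜] [NormedAddCommGroup E] [NormedSpace 𝕜 E]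
    [NormedAddCommGroup F] [NormedSpace 𝕜 F] (T : E →L[𝕜] F) : ‖T.dualMap‖ ≤ ‖T‖ :=
  T.dualMap.opNorm_le_bound (norm_nonneg T) fun g => (g.opNorm_comp_le T).trans_eq (mul_comm _ _)

section

variable [RCLike 𝕜] [NormedAddCommGroup E] [NormedSpace 𝕜 E]
  [NormedAddCommGroup F] [NormedSpace 𝕜 F] {p : ℝ} {x : ℕ → E}

variable (𝕜) in
lemma weakNorm_nonneg (p : ℝ) (x : ℕ → E) : 0 ≤ weakNorm 𝕜 p x :=
  Real.iSup_nonneg fun _ => by positivity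

/-- The map `φ ↦ (φ (x j))_j` from `E*` to `ℓ^p` has closed graph, so it is bounded. -/
lemma WeaklySummable.bddAbove (hp : 1 ≤ p) (hx : WeaklySummable 𝕜 p x) :
    BddAbove (Set.range fun φ : {φ : StrongDual 𝕜 E // ‖φ‖ ≤ 1} =>
      (∑' j, ‖φ.1 (x j)‖ ^ p) ^ (1 / p)) := by
  set P := ENNReal.ofReal p
  have : Fact (1 ≤ P) := ⟨ENNReal.one_le_ofReal.mpr hp⟩
  have hP : P.toReal = p := ENNReal.toReal_ofReal (by linarith)
  let u : StrongDual 𝕜 E →ₗ[𝕜] lp (fun _ : ℕ => 𝕜) P :=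
    { toFun := fun φ => ⟨fun j => φ (x j), memℓp_gen (by simpa only [hP] using hx φ)⟩
      map_add' := fun _ _ => rfl
      map_smul' := fun _ _ => rfl }
  have hgraph : (u.graph : Set (StrongDual 𝕜 E × lp (fun _ : ℕ => 𝕜) P)) =
      {z : StrongDual 𝕜 E × lp (fun _ : ℕ => 𝕜) P | ⇑z.2 = fun j => z.1 (x j)} := by
    ext z
    rw [SetLike.mem_coe, LinearMap.mem_graph_iff]
    exact ⟨fun h => show ⇑z.2 = ⇑(u z.1) from congrArg (⇑) h, fun h => lp.ext h⟩
  have hu : Continuous u := u.continuous_of_isClosed_graph <| hgraph ▸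
    isClosed_eq (lp.uniformContinuous_coe.continuous.comp continuous_snd)
      (continuous_pi fun j => continuous_fst.clm_apply continuous_const)
  refine ⟨‖(⟨u, hu⟩ : StrongDual 𝕜 E →L[𝕜] lp (fun _ : ℕ => 𝕜) P)‖, ?_⟩
  rintro _ ⟨φ, rfl⟩
  have hnorm : ‖u φ‖ = (∑' j, ‖φ.1 (x j)‖ ^ p) ^ (1 / p) := by
    rw [lp.norm_eq_tsum_rpow (by rw [hP]; linarith), hP]
    rfl
  exact hnorm.symm.trans_le (ContinuousLinearMap.unit_le_opNorm ⟨u, hu⟩ φ.1 φ.2)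

lemma WeaklySummable.rpow_tsum_le (hp : 1 ≤ p) (hx : WeaklySummable 𝕜 p x)
    (φ : StrongDual 𝕜 E) : (∑' j, ‖φ (x j)‖ ^ p) ^ (1 / p) ≤ ‖φ‖ * weakNorm 𝕜 p x := by
  have hp0 : p ≠ 0 := by positivity
  rcases eq_or_ne φ 0 with rfl | hφ
  · simp [Real.zero_rpow hp0, Real.zero_rpow (inv_ne_zero hp0)]
  have hφ' : 0 < ‖φ‖ := norm_pos_iff.mpr hφ
  have hball : ‖((‖φ‖⁻¹ : ℝ) : 𝕜) • φ‖ ≤ 1 := by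
    rw [norm_smul, RCLike.norm_of_nonneg (inv_nonneg.mpr hφ'.le), inv_mul_cancel₀ hφ'.ne']
  have key := le_ciSup (hx.bddAbove hp) ⟨_, hball⟩
  simp only [smul_apply, norm_smul,
    RCLike.norm_of_nonneg (inv_nonneg.mpr hφ'.le)] at key
  rwa [rpow_tsum_mul_rpow hp0 (inv_nonneg.mpr hφ'.le) fun _ => norm_nonneg _,
    inv_mul_le_iff₀ hφ'] at key

lemma WeaklySummable.map (hx : WeaklySummable 𝕜 p x) (L : E →L[𝕜] F) :
    WeaklySummable 𝕜 p fun j => L (x j) :=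
  fun φ => hx (φ.comp L)

lemma WeaklySummable.weakNorm_map_le (hp : 1 ≤ p) (hx : WeaklySummable 𝕜 p x) (L : E →L[𝕜] F) :
    weakNorm 𝕜 p (fun j => L (x j)) ≤ ‖L‖ * weakNorm 𝕜 p x := by
  refine Real.iSup_le (fun φ => (hx.rpow_tsum_le hp (φ.1.comp L)).trans ?_)
    (by have := weakNorm_nonneg 𝕜 p x; positivity)
  refine mul_le_mul_of_nonneg_right ((φ.1.opNorm_comp_le L).trans ?_) (weakNorm_nonneg 𝕜 p x)
  exact mul_le_of_le_one_left (norm_nonneg L) φ.2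

lemma WeaklySummable.const_smul (hx : WeaklySummable 𝕜 p x) (c : 𝕜) :
    WeaklySummable 𝕜 p (c • x) :=
  hx.map (c • ContinuousLinearMap.id 𝕜 E)

lemma WeaklySummable.weakNorm_const_smul_le (hp : 1 ≤ p) (hx : WeaklySummable 𝕜 p x) (c : 𝕜) :
    weakNorm 𝕜 p (c • x) ≤ ‖c‖ * weakNorm 𝕜 p x :=
  (hx.weakNorm_map_le hp (c • ContinuousLinearMap.id 𝕜 E)).trans <|
    mul_le_mul_of_nonneg_right ((norm_smul_le c (ContinuousLinearMap.id 𝕜 E)).trans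
      (mul_le_of_le_one_right (norm_nonneg c) ContinuousLinearMap.norm_id_le))
      (weakNorm_nonneg 𝕜 p x)

lemma WeaklySummable.uncurry_comp_equiv (hp : 1 ≤ p) (e : ℕ ≃ ℕ × ℕ) {v : ℕ → ℕ → E}
    {b : ℕ → ℝ} (hv : ∀ k, WeaklySummable 𝕜 p (v k)) (hb : ∀ k, weakNorm 𝕜 p (v k) ≤ b k)
    (hs : Summable fun k => b k ^ p) : WeaklySummable 𝕜 p (Function.uncurry v ∘ e) := by
  intro φ
  refine (e.summable_iff (f := fun kn => ‖φ (Function.uncurry v kn)‖ ^ p)).mpr ?_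
  refine (summable_prod_of_nonneg fun _ => by positivity).mpr ⟨fun k => hv k φ, ?_⟩
  refine (hs.mul_left (‖φ‖ ^ p)).of_nonneg_of_le (fun k => tsum_nonneg fun _ => by positivity)
    fun k => ?_
  have hbk : 0 ≤ b k := (weakNorm_nonneg 𝕜 p (v k)).trans (hb k)
  have hrow := ((hv k).rpow_tsum_le hp φ).trans (mul_le_mul_of_nonneg_left (hb k) (norm_nonneg φ))
  rw [one_div, Real.rpow_inv_le_iff_of_pos (tsum_nonneg fun _ => by positivity)
    (by positivity) (by linarith), Real.mul_rpow (norm_nonneg φ) hbk] at hrow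
  exact hrow

variable (𝕜) in
def mixedSum (q p : ℝ) (xs : ℕ → StrongDual 𝕜 E) (x : ℕ → E) : ℝ :=
  ∑' j, (∑' n, ‖xs n (x j)‖ ^ p) ^ (q / p)

variable {q : ℝ} {xs : ℕ → StrongDual 𝕜 E}

lemma mixedSum_nonneg : 0 ≤ mixedSum 𝕜 q p xs x :=
  tsum_nonneg fun _ => Real.rpow_nonneg (tsum_nonneg fun _ => by positivity) _

lemma mixedSum_const_smul (hp : p ≠ 0) (c : 𝕜) :
    mixedSum 𝕜 q p (c • xs) x = ‖c‖ ^ q * mixedSum 𝕜 q p xs x := by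
  rw [mixedSum, mixedSum, ← tsum_mul_left]
  refine tsum_congr fun j => ?_
  simp only [Pi.smul_apply, smul_apply, norm_smul]
  rw [tsum_mul_rpow (norm_nonneg c) fun _ => norm_nonneg _,
    Real.mul_rpow (by positivity) (tsum_nonneg fun _ => by positivity),
    ← Real.rpow_mul (norm_nonneg c), mul_div_cancel₀ _ hp]

lemma mixedSum_single (hp : p ≠ 0) (hq : q ≠ 0) (v : E) :
    mixedSum 𝕜 q p xs (Pi.single 0 v) = (∑' n, ‖xs n v‖ ^ p) ^ (q / p) :=
  (hasSum_comp_single (f := fun w => (∑' n, ‖xs n w‖ ^ p) ^ (q / p))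
    (by simp [Real.zero_rpow hp, Real.zero_rpow (div_ne_zero hq hp)]) 0 v).tsum_eq

lemma MidSummable.mixedSum_comp_le (hp : 0 < p) (hq : 0 ≤ q) (hx : MidSummable 𝕜 q p x)
    (hxs : WeaklySummable 𝕜 p xs) {i : ℕ → ℕ} (hi : i.Injective) :
    mixedSum 𝕜 q p (xs ∘ i) x ≤ mixedSum 𝕜 q p xs x := by
  have hrow : ∀ j, (∑' n, ‖xs (i n) (x j)‖ ^ p) ^ (q / p) ≤ (∑' m, ‖xs m (x j)‖ ^ p) ^ (q / p) :=
    fun j => Real.rpow_le_rpow (tsum_nonneg fun _ => by positivity)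
      (tsum_comp_le_tsum_of_inj (hxs (inclusionInDoubleDual 𝕜 E (x j)))
        (fun _ => by positivity) hi) (by positivity)
  exact ((hx xs hxs).of_nonneg_of_le (fun _ => by positivity) hrow).tsum_le_tsum hrow (hx xs hxs)

lemma MidSummable.exists_mixedSum_le (hp : 1 ≤ p) (hq : 0 < q) (hx : MidSummable 𝕜 q p x) :
    ∃ C, ∀ xs : ℕ → StrongDual 𝕜 E, WeaklySummable 𝕜 p xs → weakNorm 𝕜 p xs ≤ 1 →
      mixedSum 𝕜 q p xs x ≤ C := by
  -- Gliding hump: pick `w k` in the unit ball with mixed sum `> k * 2^(kq)`; the sequences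
  -- `2^(-k) • w k`, glued along `ℕ ≃ ℕ × ℕ`, form one weakly `p`-summable sequence whose
  -- mixed sum exceeds every `k`.
  by_contra! hcon
  set b : ℕ → ℝ := fun k => (1 / 2) ^ k
  have hb : ∀ k, 0 < b k := fun k => by positivity
  choose w hwW hw1 hwC using fun k : ℕ => hcon (k / b k ^ q)
  set v : ℕ → ℕ → StrongDual 𝕜 E := fun k => (b k : 𝕜) • w k
  have hvW : ∀ k, WeaklySummable 𝕜 p (v k) := fun k => (hwW k).const_smul _
  have hvb : ∀ k, weakNorm 𝕜 p (v k) ≤ b k := fun k =>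
    ((hwW k).weakNorm_const_smul_le hp _).trans <| by
      rw [RCLike.norm_of_nonneg (hb k).le]
      exact mul_le_of_le_one_right (hb k).le (hw1 k)
  have hsum : Summable fun k => b k ^ p :=
    summable_geometric_two.of_nonneg_of_le (fun k => Real.rpow_nonneg (hb k).le _) fun k =>
      (Real.rpow_le_rpow_of_exponent_ge (hb k) (pow_le_one₀ (by norm_num) (by norm_num))
        hp).trans_eq (Real.rpow_one _)
  set e : ℕ ≃ ℕ × ℕ := Nat.pairEquiv.symm
  have hys := WeaklySummable.uncurry_comp_equiv hp e hvW hvb hsum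
  obtain ⟨k, hk⟩ := exists_nat_gt (mixedSum 𝕜 q p (Function.uncurry v ∘ e) x)
  have hslice : (Function.uncurry v ∘ e) ∘ (fun n => e.symm (k, n)) = v k := by
    funext n
    simp
  have hle := hx.mixedSum_comp_le (by linarith) hq.le hys
    (i := fun n => e.symm (k, n)) fun n m h => by simpa using h
  rw [hslice, mixedSum_const_smul (by positivity), RCLike.norm_of_nonneg (hb k).le] at hle
  have hwk := (div_lt_iff₀' (by positivity)).mp (hwC k)
  linarith

lemma MidSummable.rpow_mixedSum_le_midNorm (hp : 1 ≤ p) (hq : 0 < q) (hx : MidSummable 𝕜 q p x)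
    (hxs : WeaklySummable 𝕜 p xs) (hw : weakNorm 𝕜 p xs ≤ 1) :
    mixedSum 𝕜 q p xs x ^ (1 / q) ≤ midNorm 𝕜 q p x := by
  obtain ⟨C, hC⟩ := hx.exists_mixedSum_le hp hq
  refine le_ciSup (f := fun xs : {xs : ℕ → StrongDual 𝕜 E // WeaklySummable 𝕜 p xs ∧
    weakNorm 𝕜 p xs ≤ 1} => mixedSum 𝕜 q p xs.1 x ^ (1 / q)) ⟨C ^ (1 / q), ?_⟩ ⟨xs, hxs, hw⟩
  rintro _ ⟨ys, rfl⟩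
  exact Real.rpow_le_rpow mixedSum_nonneg (hC ys.1 ys.2.1 ys.2.2) (by positivity)

lemma MidSummable.rpow_mixedSum_le (hp : 1 ≤ p) (hq : 0 < q) (hx : MidSummable 𝕜 q p x)
    (hxs : WeaklySummable 𝕜 p xs) :
    mixedSum 𝕜 q p xs x ^ (1 / q) ≤ weakNorm 𝕜 p xs * midNorm 𝕜 q p x := by
  have key : ∀ c > weakNorm 𝕜 p xs, mixedSum 𝕜 q p xs x ^ (1 / q) ≤ c * midNorm 𝕜 q p x := by
    intro c hc
    have hc0 : 0 < c := (weakNorm_nonneg 𝕜 p xs).trans_lt hc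
    have hw : weakNorm 𝕜 p (((c⁻¹ : ℝ) : 𝕜) • xs) ≤ 1 :=
      (hxs.weakNorm_const_smul_le hp _).trans <| by
        rw [RCLike.norm_of_nonneg (inv_nonneg.mpr hc0.le), inv_mul_le_one₀ hc0]
        exact hc.le
    have h := hx.rpow_mixedSum_le_midNorm hp hq (hxs.const_smul _) hw
    rwa [mixedSum_const_smul (by linarith), RCLike.norm_of_nonneg (inv_nonneg.mpr hc0.le),
      Real.mul_rpow (by positivity) mixedSum_nonneg, ← Real.rpow_mul (inv_nonneg.mpr hc0.le),
      mul_one_div_cancel hq.ne', Real.rpow_one, inv_mul_le_iff₀ hc0] at h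
  have hlim : Tendsto (fun c => c * midNorm 𝕜 q p x) (𝓝[>] weakNorm 𝕜 p xs)
      (𝓝 (weakNorm 𝕜 p xs * midNorm 𝕜 q p x)) :=
    tendsto_nhdsWithin_of_tendsto_nhds ((continuous_id.mul continuous_const).tendsto _)
  exact ge_of_tendsto hlim (eventually_nhdsWithin_of_forall key)

lemma midNorm_nonneg : 0 ≤ midNorm 𝕜 q p x :=
  Real.iSup_nonneg fun _ => Real.rpow_nonneg mixedSum_nonneg _

lemma mixedSum_dualMap (T : E →L[𝕜] F) (ys : ℕ → StrongDual 𝕜 F) :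
    mixedSum 𝕜 q p (fun n => T.dualMap (ys n)) x = mixedSum 𝕜 q p ys fun j => T (x j) := by
  simp only [mixedSum, ContinuousLinearMap.dualMap_apply, ContinuousLinearMap.comp_apply]

lemma MidSummable.map (hx : MidSummable 𝕜 q p x) (T : E →L[𝕜] F) :
    MidSummable 𝕜 q p fun j => T (x j) := fun ys hys => by
  simpa only [ContinuousLinearMap.dualMap_apply, ContinuousLinearMap.comp_apply]
    using hx _ (hys.map T.dualMap)

lemma MidSummable.midNorm_map_le (hp : 1 ≤ p) (hq : 0 < q) (hx : MidSummable 𝕜 q p x)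
    (T : E →L[𝕜] F) : midNorm 𝕜 q p (fun j => T (x j)) ≤ ‖T‖ * midNorm 𝕜 q p x := by
  refine Real.iSup_le (fun ys => ?_) (mul_nonneg (norm_nonneg T) midNorm_nonneg)
  change mixedSum 𝕜 q p ys.1 (fun j => T (x j)) ^ (1 / q) ≤ _
  rw [← mixedSum_dualMap]
  have hw : weakNorm 𝕜 p (fun n => T.dualMap (ys.1 n)) ≤ ‖T‖ :=
    (ys.2.1.weakNorm_map_le hp T.dualMap).trans <|
      (mul_le_mul T.norm_dualMap_le ys.2.2 (weakNorm_nonneg 𝕜 p _) (norm_nonneg T)).trans_eq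
        (mul_one _)
  exact (hx.rpow_mixedSum_le hp hq (ys.2.1.map T.dualMap)).trans
    (mul_le_mul_of_nonneg_right hw midNorm_nonneg)

lemma midSummable_single (hp : p ≠ 0) (hq : q ≠ 0) (v : E) :
    MidSummable 𝕜 q p (Pi.single 0 v) := fun xs _ =>
  (hasSum_comp_single (f := fun w => (∑' n, ‖xs n w‖ ^ p) ^ (q / p))
    (by simp [Real.zero_rpow hp, Real.zero_rpow (div_ne_zero hq hp)]) 0 v).summable

lemma midNorm_single_le (hp : 1 ≤ p) (hq : 0 < q) (v : E) :
    midNorm 𝕜 q p (Pi.single 0 v) ≤ ‖v‖ := by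
  refine Real.iSup_le (fun xs => ?_) (norm_nonneg v)
  change mixedSum 𝕜 q p xs.1 (Pi.single 0 v) ^ (1 / q) ≤ ‖v‖
  rw [mixedSum_single (by positivity) hq.ne', rpow_div_rpow_one_div hq.ne'
    (tsum_nonneg fun _ => by positivity)]
  exact (xs.2.1.rpow_tsum_le hp (inclusionInDoubleDual 𝕜 E v)).trans <|
    (mul_le_mul (double_dual_bound 𝕜 E v) xs.2.2 (weakNorm_nonneg 𝕜 p _) (norm_nonneg v)).trans_eq
      (mul_one _)

lemma norm_le_midNorm_single (hp : 1 ≤ p) (hq : 0 < q) (v : E) :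
    ‖v‖ ≤ midNorm 𝕜 q p (Pi.single 0 v) := by
  have hp0 : p ≠ 0 := by positivity
  obtain ⟨g, hg1, hgv⟩ := exists_dual_vector'' 𝕜 v
  have hsingle (Φ : StrongDual 𝕜 (StrongDual 𝕜 E)) :=
    hasSum_comp_single (f := fun ψ => ‖Φ ψ‖ ^ p) (by simp [Real.zero_rpow hp0]) 0 g
  have hw : weakNorm 𝕜 p (Pi.single 0 g) ≤ 1 := by
    refine Real.iSup_le (fun Φ => ?_) zero_le_one
    rw [(hsingle Φ.1).tsum_eq, one_div, Real.rpow_rpow_inv (norm_nonneg _) hp0]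
    exact (Φ.1.le_opNorm g).trans (mul_le_one₀ Φ.2 (norm_nonneg g) hg1)
  have h := (midSummable_single hp0 hq.ne' v).rpow_mixedSum_le_midNorm hp hq
    (fun Φ => (hsingle Φ).summable) hw
  rwa [mixedSum_single hp0 hq.ne',
    rpow_div_rpow_one_div hq.ne' (tsum_nonneg fun _ => by positivity),
    (hasSum_comp_single (f := fun ψ => ‖ψ v‖ ^ p) (by simp [Real.zero_rpow hp0]) 0 g).tsum_eq,
    hgv, RCLike.norm_ofReal, abs_norm, one_div, Real.rpow_rpow_inv (norm_nonneg _) hp0] at h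

end

theorem stmt10_general [RCLike 𝕜] [NormedAddCommGroup E] [NormedSpace 𝕜 E]
    [NormedAddCommGroup F] [NormedSpace 𝕜 F]
    (p q : ℝ) (hp : 1 ≤ p) (hq : 1 ≤ q) (T : E →L[𝕜] F) :
    (∀ x : ℕ → E, MidSummable 𝕜 q p x → MidSummable 𝕜 q p fun j => T (x j)) ∧
    sInf {C : ℝ | 0 ≤ C ∧ ∀ x : ℕ → E, MidSummable 𝕜 q p x →
        midNorm 𝕜 q p (fun j => T (x j)) ≤ C * midNorm 𝕜 q p x} = ‖T‖ := by
  have hq0 : 0 < q := by linarith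
  have hbound (x : ℕ → E) (hx : MidSummable 𝕜 q p x) := hx.midNorm_map_le hp hq0 T
  refine ⟨fun x hx => hx.map T, le_antisymm
    (csInf_le ⟨0, fun _ hC => hC.1⟩ ⟨norm_nonneg T, hbound⟩)
    (le_csInf ⟨‖T‖, norm_nonneg T, hbound⟩ ?_)⟩
  rintro C ⟨hC0, hC⟩
  refine T.opNorm_le_bound hC0 fun v => ?_
  have hmap : (fun j => T ((Pi.single 0 v : ℕ → E) j)) = Pi.single 0 (T v) :=
    funext fun j => Pi.apply_single (fun _ => ⇑T) (fun _ => map_zero T) 0 v j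
  calc ‖T v‖ ≤ midNorm 𝕜 q p (Pi.single 0 (T v)) := norm_le_midNorm_single hp hq0 _
    _ ≤ C * midNorm 𝕜 q p (Pi.single 0 v) :=
        hmap ▸ hC _ (midSummable_single (by positivity) hq0.ne' v)
    _ ≤ C * ‖v‖ := mul_le_mul_of_nonneg_left (midNorm_single_le hp hq0 v) hC0

/-- a bounded linear operator `T : E → F` maps mid `(q,p)`-summable sequences to
mid `(q,p)`-summable sequences, and the induced operator
`T̂ : ℓ_{q,p}^mid(E) → ℓ_{q,p}^mid(F)` is bounded with `‖T̂‖ = ‖T‖`. -/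
theorem stmt10 [RCLike 𝕜] [NormedAddCommGroup E] [NormedSpace 𝕜 E] [CompleteSpace E]
    [NormedAddCommGroup F] [NormedSpace 𝕜 F] [CompleteSpace F]
    (p q : ℝ) (hp : 1 ≤ p) (hq : 1 ≤ q) (T : E →L[𝕜] F) :
    (∀ x : ℕ → E, MidSummable 𝕜 q p x → MidSummable 𝕜 q p fun j => T (x j)) ∧
    sInf {C : ℝ | 0 ≤ C ∧ ∀ x : ℕ → E, MidSummable 𝕜 q p x →
        midNorm 𝕜 q p (fun j => T (x j)) ≤ C * midNorm 𝕜 q p x} = ‖T‖ :=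
  stmt10_general p q hp hq T
end
end
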